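/- arXiv:2201.08114 — 3 statements merged into one kernel-verified Lean document; each statement's English description precedes it below -/
import Mathlib

section
/- Let p = 1 (cubic case), A(u) = u² - u⁴, and for 0 < 𝔭 < 𝔭₊ with β = -A(𝔭₊) define T₊(𝔭,𝔮) = ∫_𝔭^{𝔭₊} du/√(β + A(u)) where 𝔮² = β + A(𝔭). Then for every fixed 𝔭 ∈ (0, 1/√2], the map 𝔮 ↦ T₊(𝔭,𝔮) is strictly monotonically decreasing on (0,∞). -/
/-!
Substituting `u² = 𝔭² + Mσ` with `M = 𝔭₊² - 𝔭²` maps `[𝔭, 𝔭₊]` onto `[0, 1]`, and since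
`𝔮² - A(𝔭) + A(u) = (𝔭₊² - u²)(u² + 𝔭₊² - 1)` the period becomes
`∫₀¹ dσ / (2 √((1 - σ)(𝔭² + Mσ)(1 + σ - k/M)))` with `k = 1 - 2𝔭²`. When `k ≥ 0`, i.e.
`𝔭 ≤ 1/√2`, this integrand is strictly decreasing in `M` for every `σ`, and `M` is increasing
in `𝔮` because `𝔮² = M(M - k)`.
-/

open MeasureTheory Set Filter intervalIntegral

theorem integral_eq_integral_comp_sqrt_affine {E : Type*} [NormedAddCommGroup E]
    [NormedSpace ℝ E] {a b : ℝ} (ha : 0 ≤ a) (hab : a < b) (g : ℝ → E) :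
    ∫ u in a..b, g u = ∫ σ in (0 : ℝ)..1,
      ((b ^ 2 - a ^ 2) / (2 * √(a ^ 2 + (b ^ 2 - a ^ 2) * σ))) •
        g √(a ^ 2 + (b ^ 2 - a ^ 2) * σ) := by
  have hM : 0 < b ^ 2 - a ^ 2 := by nlinarith
  have hderiv : ∀ σ ∈ Ioo (0 : ℝ) 1, HasDerivAt (fun σ => √(a ^ 2 + (b ^ 2 - a ^ 2) * σ))
      ((b ^ 2 - a ^ 2) / (2 * √(a ^ 2 + (b ^ 2 - a ^ 2) * σ))) σ := fun σ hσ =>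
    (((hasDerivAt_id σ).const_mul _).const_add _).sqrt
      (add_pos_of_nonneg_of_pos (sq_nonneg a) (mul_pos hM hσ.1)).ne' |>.congr_deriv (by simp)
  have hsubst := integral_Icc_deriv_smul_of_deriv_nonneg (g := g) (by fun_prop) hderiv
    (fun σ _ => by positivity) zero_le_one
  rw [integral_of_le hab.le, integral_of_le zero_le_one, ← integral_Icc_eq_integral_Ioc,
    ← integral_Icc_eq_integral_Ioc, hsubst]
  simp [Real.sqrt_sq ha, Real.sqrt_sq (ha.trans hab.le)]

noncomputable def periodKernel (a k M σ : ℝ) : ℝ :=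
  1 / (2 * √((1 - σ) * (a + M * σ) * (1 + σ - k / M)))

theorem periodKernel_lt_of_lt {a k M₁ M₂ σ : ℝ} (ha : 0 ≤ a) (hk : 0 ≤ k) (hkM : k < M₁)
    (hM : M₁ < M₂) (hσ : σ ∈ Ioo (0 : ℝ) 1) :
    periodKernel a k M₂ σ < periodKernel a k M₁ σ := by
  obtain ⟨hσ₀, hσ₁⟩ := hσ
  have hM₁ : 0 < M₁ := hk.trans_lt hkM
  have hP₁ : 0 < (1 - σ) * (a + M₁ * σ) := mul_pos (by linarith) (by positivity)
  have hP : (1 - σ) * (a + M₁ * σ) < (1 - σ) * (a + M₂ * σ) :=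
    mul_lt_mul_of_pos_left (by linarith [mul_lt_mul_of_pos_right hM hσ₀]) (by linarith)
  have hQ₁ : 0 < 1 + σ - k / M₁ := by linarith [div_le_one_of_le₀ hkM.le hM₁.le]
  have hQ : 1 + σ - k / M₁ ≤ 1 + σ - k / M₂ := by
    linarith [div_le_div_of_nonneg_left hk hM₁ hM.le]
  have hX₁ := mul_pos hP₁ hQ₁
  exact one_div_lt_one_div_of_lt (by positivity) <| mul_lt_mul_of_pos_left
    (Real.sqrt_lt_sqrt hX₁.le (mul_lt_mul hP hQ hQ₁ (hP₁.trans hP).le)) two_pos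

theorem intervalIntegrable_periodKernel {a k M : ℝ} (ha : 0 < a) (hM : 0 < M) (hkM : k < M) :
    IntervalIntegrable (periodKernel a k M) volume 0 1 := by
  have hk' : 0 < 1 - k / M := by rw [sub_pos, div_lt_one hM]; exact hkM
  have hmaj : IntervalIntegrable (fun σ => 1 / (2 * √(a * (1 - k / M))) * (1 - σ) ^ (-(1 / 2) : ℝ))
      volume 0 1 := by
    have := (intervalIntegral.intervalIntegrable_rpow' (a := 0) (b := 1)
      (r := -(1 / 2)) (by norm_num)).comp_sub_left 1
    simpa using (this.symm.const_mul (1 / (2 * √(a * (1 - k / M)))))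
  refine hmaj.mono_fun (Measurable.aestronglyMeasurable (by unfold periodKernel; fun_prop)) ?_
  rw [EventuallyLE, uIoc_of_le zero_le_one, ae_restrict_iff' measurableSet_Ioc]
  refine ae_of_all _ fun σ ⟨hσ₀, hσ₁⟩ => ?_
  have h1σ : 0 ≤ 1 - σ := by linarith
  have hY : a * (1 - k / M) ≤ (a + M * σ) * (1 + σ - k / M) :=
    mul_le_mul (by nlinarith) (by linarith) hk'.le (by nlinarith)
  have hbound : periodKernel a k M σ ≤ 1 / (2 * √(a * (1 - k / M))) * (1 - σ) ^ (-(1 / 2) : ℝ) :=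
    calc periodKernel a k M σ
        = 1 / (2 * √((a + M * σ) * (1 + σ - k / M))) * (1 / √(1 - σ)) := by
          rw [periodKernel, mul_assoc, Real.sqrt_mul h1σ, one_div_mul_one_div]; ring_nf
      _ ≤ 1 / (2 * √(a * (1 - k / M))) * (1 / √(1 - σ)) := by gcongr
      _ = 1 / (2 * √(a * (1 - k / M))) * (1 - σ) ^ (-(1 / 2) : ℝ) := by
          rw [Real.rpow_neg h1σ, ← Real.sqrt_eq_rpow, one_div (√(1 - σ))]
  rw [Real.norm_of_nonneg (by unfold periodKernel; positivity),
    Real.norm_of_nonneg (by positivity)]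
  exact hbound

theorem strictAntiOn_integral_periodKernel {a k : ℝ} (ha : 0 < a) (hk : 0 ≤ k) :
    StrictAntiOn (fun M => ∫ σ in (0 : ℝ)..1, periodKernel a k M σ) (Ioi k) := by
  intro M₁ hM₁ M₂ hM₂ hM
  have hint₁ := intervalIntegrable_periodKernel ha (hk.trans_lt hM₁) hM₁
  have hint₂ := intervalIntegrable_periodKernel ha (hk.trans_lt hM₂) hM₂
  rw [← sub_pos, ← integral_sub hint₁ hint₂]
  exact intervalIntegral_pos_of_pos_on (hint₁.sub hint₂)
    (fun σ hσ => sub_pos.2 (periodKernel_lt_of_lt ha.le hk hM₁ hM hσ)) zero_lt_one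

theorem sq_eq_of_turning_point {A : ℝ → ℝ} (hA : ∀ u, A u = u ^ 2 - u ^ 4) {p pp q : ℝ}
    (hroot : q ^ 2 - A p + A pp = 0) :
    q ^ 2 = (pp ^ 2 - p ^ 2) * (pp ^ 2 - p ^ 2 - (1 - 2 * p ^ 2)) := by
  rw [hA, hA] at hroot
  linear_combination hroot

theorem period_eq_integral_periodKernel {A : ℝ → ℝ} (hA : ∀ u, A u = u ^ 2 - u ^ 4)
    {p pp q : ℝ} (hp : 0 ≤ p) (hpp : p < pp) (hroot : q ^ 2 - A p + A pp = 0) :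
    ∫ u in p..pp, 1 / √(q ^ 2 - A p + A u)
      = ∫ σ in (0 : ℝ)..1, periodKernel (p ^ 2) (1 - 2 * p ^ 2) (pp ^ 2 - p ^ 2) σ := by
  have hq := sq_eq_of_turning_point hA hroot
  have hM : 0 < pp ^ 2 - p ^ 2 := by nlinarith
  rw [integral_eq_integral_comp_sqrt_affine hp hpp]
  set M := pp ^ 2 - p ^ 2
  set k := 1 - 2 * p ^ 2
  refine integral_congr fun σ hσ => ?_
  rw [uIcc_of_le zero_le_one] at hσ
  set v := p ^ 2 + M * σ
  have hv : 0 ≤ v := by nlinarith [hσ.1]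
  have henergy : q ^ 2 - A p + A √v = M ^ 2 * ((1 - σ) * (1 + σ - k / M)) := by
    have hu : √v ^ 4 = v ^ 2 := by rw [show 4 = 2 * 2 by rfl, pow_mul, Real.sq_sqrt hv]
    rw [hA, hA, hu, Real.sq_sqrt hv, hq]
    field_simp
    ring
  rw [henergy, smul_eq_mul, periodKernel, Real.sqrt_mul (sq_nonneg M), Real.sqrt_sq hM.le,
    show (1 - σ) * v * (1 + σ - k / M) = v * ((1 - σ) * (1 + σ - k / M)) by ring,
    Real.sqrt_mul hv]
  field_simp

/-- Monotonicity of the period function in the cubic case. With `A(u) = u² - u⁴`, fix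
`𝔭 ∈ (0, 1/√2]`. For each `𝔮 > 0`, the turning point `𝔭₊` is the smallest root above
`𝔭` of `𝔮² - A(𝔭) + A(𝔭₊) = 0`, and the period function is
`T₊(𝔭,𝔮) = ∫_𝔭^{𝔭₊} du/√(𝔮² - A(𝔭) + A(u))`. Then `𝔮 ↦ T₊(𝔭,𝔮)` is strictly
decreasing on `(0,∞)`. -/
theorem period_function_strictly_decreasing
    (A : ℝ → ℝ) (hA : ∀ u : ℝ, A u = u ^ 2 - u ^ 4)
    (p : ℝ) (hp0 : 0 < p) (hp : p ≤ 1 / Real.sqrt 2)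
    (q₁ q₂ : ℝ) (hq₁ : 0 < q₁) (hq : q₁ < q₂)
    (pp₁ pp₂ : ℝ)
    (h₁ : p < pp₁ ∧ q₁ ^ 2 - A p + A pp₁ = 0 ∧
      ∀ s : ℝ, p < s → s < pp₁ → 0 < q₁ ^ 2 - A p + A s)
    (h₂ : p < pp₂ ∧ q₂ ^ 2 - A p + A pp₂ = 0 ∧
      ∀ s : ℝ, p < s → s < pp₂ → 0 < q₂ ^ 2 - A p + A s) :
    (∫ u in p..pp₂, 1 / Real.sqrt (q₂ ^ 2 - A p + A u))
      < ∫ u in p..pp₁, 1 / Real.sqrt (q₁ ^ 2 - A p + A u) := by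
  obtain ⟨hpp₁, hroot₁, -⟩ := h₁
  obtain ⟨hpp₂, hroot₂, -⟩ := h₂
  rw [period_eq_integral_periodKernel hA hp0.le hpp₁ hroot₁,
    period_eq_integral_periodKernel hA hp0.le hpp₂ hroot₂]
  have hk : 0 ≤ 1 - 2 * p ^ 2 := by
    have := pow_le_pow_left₀ hp0.le hp 2
    rw [div_pow, one_pow, Real.sq_sqrt zero_le_two] at this
    linarith
  have hM₁ : 0 < pp₁ ^ 2 - p ^ 2 := by nlinarith
  have hM₂ : 0 < pp₂ ^ 2 - p ^ 2 := by nlinarith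
  have hE₁ := sq_eq_of_turning_point hA hroot₁
  have hE₂ := sq_eq_of_turning_point hA hroot₂
  set k := 1 - 2 * p ^ 2
  set M₁ := pp₁ ^ 2 - p ^ 2
  set M₂ := pp₂ ^ 2 - p ^ 2
  have hkM₁ : k < M₁ := sub_pos.1 (pos_of_mul_pos_right (hE₁ ▸ pow_pos hq₁ 2) hM₁.le)
  have hM : M₁ < M₂ := by
    by_contra! h
    have hsq : q₂ ^ 2 ≤ q₁ ^ 2 := by
      rw [hE₁, hE₂, ← sub_nonneg]
      nlinarith [mul_nonneg (sub_nonneg.2 h) (by linarith : 0 ≤ M₁ + M₂ - k)]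
    exact (pow_lt_pow_left₀ hq hq₁.le two_ne_zero).not_ge hsq
  exact strictAntiOn_integral_periodKernel (by positivity) hk hkM₁ (hkM₁.trans hM) hM
end

section
/- Let p = 1 and A(u) = u² - u⁴. For fixed 𝔭 ∈ (1/√2, 1), the period function T₊(𝔭,𝔮) satisfies T₊(𝔭,𝔮) → 0 as 𝔮 → 0⁺ and T₊(𝔭,𝔮) → 0 as 𝔮 → ∞; in particular for all small enough and all large enough 𝔮 the period is smaller than its value at interior points, so T₊(𝔭,·) is non-monotone on (0,∞). -/
open MeasureTheory Set Filter

lemma inv_sqrt_eq_rpow (x : ℝ) : (Real.sqrt x)⁻¹ = x ^ (-(1/2) : ℝ) := by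
  rcases le_or_gt 0 x with hx | hx
  · rw [Real.sqrt_eq_rpow, ← Real.rpow_neg hx]
  · rw [Real.sqrt_eq_zero'.2 (le_of_lt hx), inv_zero, Real.rpow_def_of_neg hx,
      show (-(1/2):ℝ) * Real.pi = -(Real.pi/2) by ring, Real.cos_neg,
      Real.cos_pi_div_two, mul_zero]

lemma inv_sqrt_integral (L : ℝ) (hL : 0 ≤ L) :
    IntervalIntegrable (fun x : ℝ => (Real.sqrt x)⁻¹) volume 0 L ∧
    ∫ x in (0:ℝ)..L, (Real.sqrt x)⁻¹ = 2 * Real.sqrt L := by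
  have hr : (-1 : ℝ) < -(1/2) := by norm_num
  constructor
  · simpa only [← inv_sqrt_eq_rpow] using
      intervalIntegral.intervalIntegrable_rpow' (a := 0) (b := L) hr
  · rw [show (fun x : ℝ => (Real.sqrt x)⁻¹) = fun x : ℝ => x ^ (-(1/2) : ℝ) from
      funext inv_sqrt_eq_rpow]
    rw [integral_rpow (Or.inl hr), Real.sqrt_eq_rpow]
    norm_num
    ring

lemma maj_integral (a b c : ℝ) (hab : a ≤ b) (hc : 0 < c) :
    IntervalIntegrable (fun u => 1 / Real.sqrt (c * (b - u))) volume a b ∧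
    ∫ u in a..b, 1 / Real.sqrt (c * (b - u)) = 2 * Real.sqrt (b - a) / Real.sqrt c := by
  have hfe : (fun u => 1 / Real.sqrt (c * (b - u)))
      = fun u => (Real.sqrt c)⁻¹ * (Real.sqrt (b - u))⁻¹ := by
    funext u
    rw [Real.sqrt_mul hc.le, one_div, mul_inv]
  obtain ⟨hint, hval⟩ := inv_sqrt_integral (b - a) (by linarith)
  have hcomp : IntervalIntegrable (fun u => (Real.sqrt (b - u))⁻¹) volume a b := by
    have := (hint.comp_sub_left b).symm
    simpa using this
  constructor
  · rw [hfe]; exact hcomp.const_mul _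
  · rw [hfe, intervalIntegral.integral_const_mul,
      intervalIntegral.integral_comp_sub_left (fun x : ℝ => (Real.sqrt x)⁻¹) b]
    simp only [sub_self]
    rw [hval, inv_mul_eq_div]

lemma comp_bound (g : ℝ → ℝ) (hg : Continuous g) (a b c : ℝ) (hab : a ≤ b) (hc : 0 < c)
    (hgb : g b = 0) (hbd : ∀ u ∈ Set.Icc a b, c * (b - u) ≤ g u) :
    IntervalIntegrable (fun u => 1 / Real.sqrt (g u)) volume a b ∧
    ∫ u in a..b, 1 / Real.sqrt (g u) ≤ 2 * Real.sqrt (b - a) / Real.sqrt c := by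
  obtain ⟨hmi, hmv⟩ := maj_integral a b c hab hc
  have hpt : ∀ u ∈ Set.Icc a b, 1 / Real.sqrt (g u) ≤ 1 / Real.sqrt (c * (b - u)) := by
    intro u hu
    rcases eq_or_lt_of_le hu.2 with h | h
    · subst h; simp [hgb]
    · have h1 : 0 < c * (b - u) := by nlinarith
      have h2 : c * (b - u) ≤ g u := hbd u hu
      rw [one_div, one_div]
      exact inv_anti₀ (Real.sqrt_pos.2 h1) (Real.sqrt_le_sqrt h2)
  have hmeas : AEStronglyMeasurable (fun u => 1 / Real.sqrt (g u))
      (volume.restrict (Set.uIoc a b)) := by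
    have : Measurable fun u => 1 / Real.sqrt (g u) := by
      simp only [one_div]
      exact (Real.continuous_sqrt.comp hg).measurable.inv
    exact this.aestronglyMeasurable
  have hint : IntervalIntegrable (fun u => 1 / Real.sqrt (g u)) volume a b := by
    apply hmi.mono_fun hmeas
    apply MeasureTheory.ae_restrict_of_forall_mem measurableSet_uIoc
    intro u hu
    rw [Set.uIoc_of_le hab] at hu
    have hu' : u ∈ Set.Icc a b := ⟨le_of_lt hu.1, hu.2⟩
    have h0 : (0:ℝ) ≤ 1 / Real.sqrt (g u) := by positivity
    have h0' : (0:ℝ) ≤ 1 / Real.sqrt (c * (b - u)) := by positivity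
    simp only [Real.norm_eq_abs, abs_of_nonneg h0, abs_of_nonneg h0']
    exact hpt u hu'
  refine ⟨hint, ?_⟩
  calc ∫ u in a..b, 1 / Real.sqrt (g u)
      ≤ ∫ u in a..b, 1 / Real.sqrt (c * (b - u)) :=
        intervalIntegral.integral_mono_on hab hint hmi hpt
    _ = 2 * Real.sqrt (b - a) / Real.sqrt c := hmv

set_option maxHeartbeats 1600000 in
/-- Non-monotonicity of the period function for `𝔭 ∈ (1/√2, 1)` in the cubic case.
With `A(u) = u² - u⁴`, `pp q` the smallest root above `𝔭` of `q² - A(𝔭) + A(·) = 0`,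
and `T q = ∫_𝔭^{pp q} du/√(q² - A(𝔭) + A(u))`, one has `T(q) → 0` as `q → 0⁺` and as
`q → ∞`; in particular `T` is not monotone on `(0,∞)`. -/
theorem period_function_nonmonotone
    (A : ℝ → ℝ) (hA : ∀ u : ℝ, A u = u ^ 2 - u ^ 4)
    (p : ℝ) (hp1 : 1 / Real.sqrt 2 < p) (hp2 : p < 1)
    (pp : ℝ → ℝ)
    (hpp : ∀ q : ℝ, 0 < q → p < pp q ∧ q ^ 2 - A p + A (pp q) = 0 ∧
      ∀ s : ℝ, p < s → s < pp q → 0 < q ^ 2 - A p + A s)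
    (T : ℝ → ℝ)
    (hT : ∀ q : ℝ, 0 < q →
      T q = ∫ u in p..(pp q), 1 / Real.sqrt (q ^ 2 - A p + A u)) :
    Filter.Tendsto T (nhdsWithin 0 (Set.Ioi 0)) (nhds 0) ∧
    Filter.Tendsto T Filter.atTop (nhds 0) ∧
    ¬ MonotoneOn T (Set.Ioi 0) ∧ ¬ AntitoneOn T (Set.Ioi 0) := by
  have hp0 : 0 < p := lt_trans (by positivity) hp1
  have hpsq : 1 / 2 < p ^ 2 := by
    have h1 : (1 / Real.sqrt 2) ^ 2 < p ^ 2 :=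
      pow_lt_pow_left₀ hp1 (by positivity) (by norm_num)
    rwa [div_pow, one_pow, Real.sq_sqrt (by norm_num : (0:ℝ) ≤ 2)] at h1
  set m : ℝ := 2 * p * (2 * p ^ 2 - 1) with hm_def
  have hm : 0 < m := by rw [hm_def]; nlinarith
  -- key algebraic identity
  have hid : ∀ q : ℝ, 0 < q → ∀ u : ℝ,
      q ^ 2 - A p + A u = ((pp q) ^ 2 - u ^ 2) * ((pp q) ^ 2 + u ^ 2 - 1) := by
    intro q hq u
    have hroot := (hpp q hq).2.1
    simp only [hA] at hroot ⊢
    linear_combination hroot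
  -- continuity of the shifted potential
  have hcont : ∀ q : ℝ, Continuous fun u => q ^ 2 - A p + A u := by
    intro q
    have : (fun u => q ^ 2 - A p + A u) = fun u : ℝ => q ^ 2 - A p + (u ^ 2 - u ^ 4) := by
      funext u; rw [hA u]
    rw [this]; fun_prop
  -- uniform small-q estimates
  have main : ∀ q : ℝ, 0 < q →
      IntervalIntegrable (fun u => 1 / Real.sqrt (q ^ 2 - A p + A u)) volume p (pp q) ∧
      0 ≤ T q ∧ T q ≤ 2 * q / m := by
    intro q hq
    obtain ⟨hPp, hroot, _⟩ := hpp q hq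
    set P := pp q with hP_def
    have hbd : ∀ u ∈ Set.Icc p P, m * (P - u) ≤ q ^ 2 - A p + A u := by
      intro u hu
      rw [hid q hq u]
      have h3 : (0:ℝ) ≤ P - u := by linarith [hu.2]
      have k1 : (P - u) * (2 * p) ≤ P ^ 2 - u ^ 2 := by nlinarith [hu.1, hu.2]
      have h2 : 2 * p ^ 2 - 1 ≤ P ^ 2 + u ^ 2 - 1 := by nlinarith [hu.1, hu.2]
      have k2 : (0:ℝ) ≤ (P - u) * (2 * p) := by positivity
      have k4 : (P - u) * (2 * p) * (2 * p ^ 2 - 1) ≤ (P ^ 2 - u ^ 2) * (P ^ 2 + u ^ 2 - 1) :=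
        mul_le_mul k1 h2 (by nlinarith) (by linarith)
      nlinarith [k4]
    obtain ⟨hint, hle⟩ := comp_bound (fun u => q ^ 2 - A p + A u) (hcont q) p P m
      hPp.le hm hroot hbd
    have hTq : T q = ∫ u in p..P, 1 / Real.sqrt (q ^ 2 - A p + A u) := hT q hq
    have hT0 : 0 ≤ T q := by
      rw [hTq]
      apply intervalIntegral.integral_nonneg hPp.le
      intro u _; positivity
    have hPle : m * (P - p) ≤ q ^ 2 := by
      have h := hbd p ⟨le_refl p, hPp.le⟩
      linarith
    have hsq : Real.sqrt (P - p) ≤ q / Real.sqrt m := by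
      have h1 : P - p ≤ q ^ 2 / m := (le_div_iff₀ hm).2 (by linarith [hPle])
      have h2 : Real.sqrt (q ^ 2 / m) = q / Real.sqrt m := by
        rw [Real.sqrt_div (sq_nonneg q), Real.sqrt_sq hq.le]
      calc Real.sqrt (P - p) ≤ Real.sqrt (q ^ 2 / m) := Real.sqrt_le_sqrt h1
        _ = q / Real.sqrt m := h2
    refine ⟨hint, hT0, ?_⟩
    have hsm : (0:ℝ) < Real.sqrt m := Real.sqrt_pos.2 hm
    calc T q ≤ 2 * Real.sqrt (P - p) / Real.sqrt m := by rw [hTq]; exact hle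
      _ ≤ 2 * (q / Real.sqrt m) / Real.sqrt m := by gcongr
      _ = 2 * q / (Real.sqrt m * Real.sqrt m) := by ring
      _ = 2 * q / m := by rw [Real.mul_self_sqrt hm.le]
  -- large-q estimate
  have main2 : ∀ q : ℝ, 4 ≤ q → T q ≤ 4 / Real.sqrt q := by
    intro q hq4
    have hq : (0:ℝ) < q := by linarith
    obtain ⟨hPp, hroot, _⟩ := hpp q hq
    set P := pp q with hP_def
    have hPpos : 0 < P := lt_trans hp0 hPp
    have hx : P ^ 4 - P ^ 2 = q ^ 2 - A p := by
      simp only [hA] at hroot ⊢; linarith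
    have hAp1 : A p ≤ 1 := by rw [hA]; nlinarith
    have hAp0 : 0 ≤ A p := by rw [hA]; nlinarith
    have hq16 : 16 ≤ q ^ 2 := by nlinarith [hq4]
    have hx' : 15 ≤ P ^ 4 - P ^ 2 := by linarith
    have hP2 : 2 ≤ P ^ 2 := by nlinarith [hx', sq_nonneg P]
    have hqx : q ≤ P ^ 2 := by nlinarith [hx, hAp1, hP2, hq]
    have hc : (0:ℝ) < P ^ 3 / 2 := by positivity
    have hbd : ∀ u ∈ Set.Icc p P, (P ^ 3 / 2) * (P - u) ≤ q ^ 2 - A p + A u := by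
      intro u hu
      rw [hid q hq u]
      have h1 : P ≤ P + u := by linarith [hu.1]
      have h2 : P ^ 2 / 2 ≤ P ^ 2 + u ^ 2 - 1 := by nlinarith [sq_nonneg u]
      have h0 : P * (P ^ 2 / 2) ≤ (P + u) * (P ^ 2 + u ^ 2 - 1) :=
        mul_le_mul h1 h2 (by positivity) (by linarith)
      have h3 : (P - u) * (P * (P ^ 2 / 2)) ≤ (P - u) * ((P + u) * (P ^ 2 + u ^ 2 - 1)) :=
        mul_le_mul_of_nonneg_left h0 (by linarith [hu.2])
      nlinarith [h3]
    obtain ⟨hint, hle⟩ := comp_bound (fun u => q ^ 2 - A p + A u) (hcont q) p P (P ^ 3 / 2)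
      hPp.le hc hroot hbd
    have key : (P - p) * q ≤ 4 * (P ^ 3 / 2) := by
      nlinarith [mul_le_mul (show P - p ≤ P by linarith) hqx hq.le hPpos.le]
    have hfin : 2 * Real.sqrt (P - p) / Real.sqrt (P ^ 3 / 2) ≤ 4 / Real.sqrt q := by
      rw [div_le_div_iff₀ (Real.sqrt_pos.2 hc) (Real.sqrt_pos.2 hq)]
      have e1 : Real.sqrt (P - p) * Real.sqrt q = Real.sqrt ((P - p) * q) :=
        (Real.sqrt_mul (by linarith [hPp]) q).symm
      have e2 : Real.sqrt (4 * (P ^ 3 / 2)) = 2 * Real.sqrt (P ^ 3 / 2) := by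
        rw [show (4:ℝ) = 2 ^ 2 by norm_num, Real.sqrt_mul (by positivity),
          Real.sqrt_sq (by norm_num : (0:ℝ) ≤ 2)]
      calc 2 * Real.sqrt (P - p) * Real.sqrt q
          = 2 * Real.sqrt ((P - p) * q) := by rw [mul_assoc, e1]
        _ ≤ 2 * Real.sqrt (4 * (P ^ 3 / 2)) := by
            have := Real.sqrt_le_sqrt key
            linarith
        _ = 4 * Real.sqrt (P ^ 3 / 2) := by rw [e2]; ring
    calc T q = ∫ u in p..P, 1 / Real.sqrt (q ^ 2 - A p + A u) := hT q hq
      _ ≤ 2 * Real.sqrt (P - p) / Real.sqrt (P ^ 3 / 2) := hle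
      _ ≤ 4 / Real.sqrt q := hfin
  -- limit at 0+
  have tend0 : Filter.Tendsto T (nhdsWithin 0 (Set.Ioi 0)) (nhds 0) := by
    apply squeeze_zero'
    · filter_upwards [self_mem_nhdsWithin] with q hq using (main q hq).2.1
    · filter_upwards [self_mem_nhdsWithin] with q hq using (main q hq).2.2
    · have hc2 : Continuous fun q : ℝ => 2 * q / m := by fun_prop
      have h : Filter.Tendsto (fun q : ℝ => 2 * q / m) (nhds 0) (nhds 0) := by
        simpa using hc2.tendsto 0
      exact h.mono_left nhdsWithin_le_nhds
  -- limit at infinity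
  have tendTop : Filter.Tendsto T Filter.atTop (nhds 0) := by
    apply squeeze_zero'
    · filter_upwards [Filter.eventually_ge_atTop (4:ℝ)] with q hq
      exact (main q (by linarith)).2.1
    · filter_upwards [Filter.eventually_ge_atTop (4:ℝ)] with q hq using main2 q hq
    · have hs : Filter.Tendsto Real.sqrt Filter.atTop Filter.atTop := by
        rw [show Real.sqrt = fun x : ℝ => x ^ ((1:ℝ)/2) from funext Real.sqrt_eq_rpow]
        exact tendsto_rpow_atTop (by norm_num)
      have h := hs.inv_tendsto_atTop.const_mul (4:ℝ)
      simpa [div_eq_mul_inv] using h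
  -- positivity of T at q = 1
  have hT1 : 0 < T 1 := by
    obtain ⟨hPp, _, hpos⟩ := hpp 1 one_pos
    rw [hT 1 one_pos]
    refine intervalIntegral.intervalIntegral_pos_of_pos_on (main 1 one_pos).1 ?_ hPp
    intro u hu
    exact one_div_pos.2 (Real.sqrt_pos.2 (hpos u hu.1 hu.2))
  refine ⟨tend0, tendTop, ?_, ?_⟩
  · intro hmon
    have h1 : ∀ᶠ q in Filter.atTop, T q < T 1 := tendTop.eventually_lt_const hT1
    obtain ⟨q, hq1, hq2⟩ := (h1.and (Filter.eventually_gt_atTop 1)).exists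
    exact absurd (hmon (Set.mem_Ioi.2 one_pos) (Set.mem_Ioi.2 (by linarith)) hq2.le)
      (not_le.2 hq1)
  · intro hant
    have h1 : ∀ᶠ q in nhdsWithin 0 (Set.Ioi 0), T q < T 1 :=
      tend0.eventually_lt_const hT1
    have h2 : Set.Ioo (0:ℝ) 1 ∈ nhdsWithin 0 (Set.Ioi (0:ℝ)) :=
      Ioo_mem_nhdsGT_of_mem ⟨le_refl 0, one_pos⟩
    obtain ⟨q, hq1, hq2⟩ := (h1.and h2).exists
    exact absurd (hant (Set.mem_Ioi.2 hq2.1) (Set.mem_Ioi.2 one_pos) hq2.2.le)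
      (not_le.2 hq1)
end

section
/- Let f(𝔭) := T₊(𝔭, ½√(A(𝔭))) where A(𝔭) = 𝔭² - 𝔭⁴, i.e. f(𝔭) = ∫_𝔭^{𝔭₊} du/√(A(u) - ¾A(𝔭)) with 𝔭₊ ∈ (𝔭,1) determined by A(𝔭₊) = ¾A(𝔭), 𝔭₊ > 1/√2. Then f(𝔭) → +∞ as 𝔭 → 0⁺ and f(𝔭) → 0 as 𝔭 → 1⁻; consequently, if f is continuous and strictly decreasing on (0,1), then for every ε > 0 the equation f(𝔭) = επ has a unique root 𝔭 ∈ (0,1). -/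
open MeasureTheory Set Filter intervalIntegral Real

private lemma tp_sqrt_half : ((1:ℝ) / Real.sqrt 2) ^ 2 = 1 / 2 := by
  rw [div_pow, one_pow, Real.sq_sqrt (by norm_num : (0:ℝ) ≤ 2)]

private lemma tp_sqrt2_lt : Real.sqrt 2 < 3 / 2 := by
  nlinarith [Real.sq_sqrt (show (0:ℝ) ≤ 2 by norm_num), Real.sqrt_nonneg 2,
    sq_nonneg (Real.sqrt 2 - 3/2)]

private lemma tp_m_lt_one : (1:ℝ) / Real.sqrt 2 < 1 := by
  have h1 : (1:ℝ) < Real.sqrt 2 := by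
    nlinarith [Real.sq_sqrt (show (0:ℝ) ≤ 2 by norm_num), Real.sqrt_nonneg 2]
  rw [div_lt_one (by positivity)]
  exact h1

private lemma tp_m_gt : (2:ℝ) / 3 < 1 / Real.sqrt 2 := by
  have h0 : (0:ℝ) < Real.sqrt 2 := Real.sqrt_pos.2 (by norm_num)
  rw [lt_div_iff₀ h0]
  nlinarith [tp_sqrt2_lt]

/-- Integrability and upper bound for the pulse period integral. -/
private lemma tp_core {p q : ℝ} (hp : 0 < p) (hpq : p < q) (hq1 : q < 1)
    (hc : 1 - q ^ 2 < p ^ 2) :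
    IntervalIntegrable (fun u => 1 / Real.sqrt ((u ^ 2 - (1 - q ^ 2)) * (q ^ 2 - u ^ 2)))
      volume p q ∧
    (∫ u in p..q, 1 / Real.sqrt ((u ^ 2 - (1 - q ^ 2)) * (q ^ 2 - u ^ 2))) ≤
      (Real.sqrt ((p ^ 2 - (1 - q ^ 2)) * q))⁻¹ * (2 * Real.sqrt (q - p)) := by
  have hq0 : 0 < q := lt_trans hp hpq
  have hc' : 0 < p ^ 2 - (1 - q ^ 2) := by linarith
  set K : ℝ := (Real.sqrt ((p ^ 2 - (1 - q ^ 2)) * q))⁻¹ with hK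
  have hK0 : 0 ≤ K := by positivity
  -- pointwise bound
  have hle : ∀ u ∈ Icc p q,
      1 / Real.sqrt ((u ^ 2 - (1 - q ^ 2)) * (q ^ 2 - u ^ 2)) ≤
        K * (q - u) ^ (-(1/2) : ℝ) := by
    intro u hu
    rcases eq_or_lt_of_le hu.2 with rfl | huq
    · simp [Real.zero_rpow (by norm_num : -(1/2 : ℝ) ≠ 0)]
    · have hu0 : 0 < u := lt_of_lt_of_le hp hu.1
      have h3 : 0 < u ^ 2 - (1 - q ^ 2) := by
        nlinarith [mul_nonneg (sub_nonneg.2 hu.1) (by linarith : (0:ℝ) ≤ u + p)]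
      have h4 : 0 < q ^ 2 - u ^ 2 := by nlinarith
      have hY : 0 < (p ^ 2 - (1 - q ^ 2)) * q * (q - u) :=
        mul_pos (mul_pos hc' hq0) (by linarith)
      have hkey : (p ^ 2 - (1 - q ^ 2)) * q * (q - u) ≤
          (u ^ 2 - (1 - q ^ 2)) * (q ^ 2 - u ^ 2) := by
        nlinarith [mul_nonneg (mul_nonneg (sub_nonneg.2 hu.1) (by linarith : (0:ℝ) ≤ u + p))
            h4.le,
          mul_nonneg hc'.le (mul_nonneg hu0.le (by linarith : (0:ℝ) ≤ q - u))]
      have e1 : K * (q - u) ^ (-(1/2) : ℝ) =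
          (Real.sqrt ((p ^ 2 - (1 - q ^ 2)) * q * (q - u)))⁻¹ := by
        rw [Real.rpow_neg (by linarith : (0:ℝ) ≤ q - u), ← Real.sqrt_eq_rpow,
          Real.sqrt_mul (by positivity), mul_inv]
      rw [e1, one_div]
      exact inv_anti₀ (Real.sqrt_pos.2 hY) (Real.sqrt_le_sqrt hkey)
  -- integrability of the dominating function
  have hg : IntervalIntegrable (fun u : ℝ => (q - u) ^ (-(1/2) : ℝ)) volume p q := by
    have h1 : IntervalIntegrable (fun x : ℝ => x ^ (-(1/2) : ℝ)) volume 0 (q - p) :=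
      intervalIntegral.intervalIntegrable_rpow' (by norm_num)
    have h2 := h1.comp_sub_left q
    simpa using h2.symm
  have hgK : IntervalIntegrable (fun u : ℝ => K * (q - u) ^ (-(1/2) : ℝ)) volume p q :=
    hg.const_mul K
  have hmeas :
      Measurable (fun u : ℝ => 1 / Real.sqrt ((u ^ 2 - (1 - q ^ 2)) * (q ^ 2 - u ^ 2))) := by
    apply Measurable.div measurable_const
    exact (Real.continuous_sqrt.comp (by continuity)).measurable
  have hint : IntervalIntegrable
      (fun u => 1 / Real.sqrt ((u ^ 2 - (1 - q ^ 2)) * (q ^ 2 - u ^ 2))) volume p q := by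
    apply hgK.mono_fun hmeas.aestronglyMeasurable
    rw [Filter.EventuallyLE, ae_restrict_iff' measurableSet_uIoc]
    refine Filter.Eventually.of_forall fun u hu => ?_
    rw [Set.uIoc_of_le hpq.le] at hu
    have hu' : u ∈ Icc p q := ⟨hu.1.le, hu.2⟩
    have h1 : (0:ℝ) ≤ 1 / Real.sqrt ((u ^ 2 - (1 - q ^ 2)) * (q ^ 2 - u ^ 2)) := by positivity
    have h2 : (0:ℝ) ≤ K * (q - u) ^ (-(1/2) : ℝ) := by
      apply mul_nonneg hK0 (Real.rpow_nonneg (by linarith [hu.2]) _)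
    rw [Real.norm_eq_abs, Real.norm_eq_abs, abs_of_nonneg h1, abs_of_nonneg h2]
    exact hle u hu'
  refine ⟨hint, ?_⟩
  have hmono := intervalIntegral.integral_mono_on hpq.le hint hgK hle
  refine le_trans hmono (le_of_eq ?_)
  rw [intervalIntegral.integral_const_mul]
  congr 1
  have h5 : (∫ u in p..q, (q - u) ^ (-(1/2) : ℝ)) =
      ∫ x in (q - q)..(q - p), x ^ (-(1/2) : ℝ) :=
    intervalIntegral.integral_comp_sub_left (fun x : ℝ => x ^ (-(1/2) : ℝ)) q
  rw [h5, sub_self, integral_rpow (Or.inl (by norm_num)),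
    Real.zero_rpow (by norm_num : -(1/2 : ℝ) + 1 ≠ 0),
    show -(1/2 : ℝ) + 1 = 1/2 by norm_num, Real.sqrt_eq_rpow]
  ring

/-- Lower bound for the pulse period integral when `p < 1/√2`. -/
private lemma tp_lower {p q : ℝ} (hp : 0 < p) (hpq : p < q) (hq1 : q < 1)
    (hq2 : 1 / Real.sqrt 2 < q) (hc : 1 - q ^ 2 < p ^ 2) (hpm : p < 1 / Real.sqrt 2) :
    Real.log (1 / Real.sqrt 2) - Real.log p ≤
      ∫ u in p..q, 1 / Real.sqrt ((u ^ 2 - (1 - q ^ 2)) * (q ^ 2 - u ^ 2)) := by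
  set m : ℝ := 1 / Real.sqrt 2 with hm
  have hm0 : 0 < m := by positivity
  have hm2 : m ^ 2 = 1 / 2 := tp_sqrt_half
  have hq0 : 0 < q := lt_trans hp hpq
  have hq2' : (1:ℝ)/2 < q ^ 2 := by
    nlinarith [mul_self_lt_mul_self hm0.le hq2]
  have hpm' : p ≤ m := hpm.le
  have hpos : ∀ u ∈ Icc p m, 0 < (u ^ 2 - (1 - q ^ 2)) * (q ^ 2 - u ^ 2) := by
    intro u hu
    have h1 : 0 < u ^ 2 - (1 - q ^ 2) := by
      nlinarith [mul_nonneg (sub_nonneg.2 hu.1) (by linarith [hu.1] : (0:ℝ) ≤ u + p)]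
    have h2 : 0 < q ^ 2 - u ^ 2 := by
      nlinarith [mul_nonneg (sub_nonneg.2 hu.2) (by linarith [hu.1] : (0:ℝ) ≤ m + u)]
    exact mul_pos h1 h2
  have hcont : ContinuousOn
      (fun u => 1 / Real.sqrt ((u ^ 2 - (1 - q ^ 2)) * (q ^ 2 - u ^ 2))) (Icc p m) := by
    apply ContinuousOn.div continuousOn_const
    · exact (Real.continuous_sqrt.comp (by continuity)).continuousOn
    · intro u hu
      exact ne_of_gt (Real.sqrt_pos.2 (hpos u hu))
  have hintm : IntervalIntegrable
      (fun u => 1 / Real.sqrt ((u ^ 2 - (1 - q ^ 2)) * (q ^ 2 - u ^ 2))) volume p m := by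
    apply ContinuousOn.intervalIntegrable
    rwa [Set.uIcc_of_le hpm']
  have hint1 : IntervalIntegrable (fun u : ℝ => 1 / u) volume p m := by
    apply ContinuousOn.intervalIntegrable
    rw [Set.uIcc_of_le hpm']
    exact ContinuousOn.div continuousOn_const continuousOn_id
      (fun u hu => ne_of_gt (lt_of_lt_of_le hp hu.1))
  have hmono : ∀ u ∈ Icc p m,
      1 / u ≤ 1 / Real.sqrt ((u ^ 2 - (1 - q ^ 2)) * (q ^ 2 - u ^ 2)) := by
    intro u hu
    have hu0 : 0 < u := lt_of_lt_of_le hp hu.1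
    have hX := hpos u hu
    have h1 : 0 < u ^ 2 - (1 - q ^ 2) := by
      nlinarith [mul_nonneg (sub_nonneg.2 hu.1) (by linarith [hu.1] : (0:ℝ) ≤ u + p)]
    have h2 : 0 < q ^ 2 - u ^ 2 := by
      nlinarith [mul_nonneg (sub_nonneg.2 hu.2) (by linarith [hu.1] : (0:ℝ) ≤ m + u)]
    have hb : q ^ 2 - u ^ 2 ≤ 1 := by nlinarith
    have hXle : (u ^ 2 - (1 - q ^ 2)) * (q ^ 2 - u ^ 2) ≤ u ^ 2 := by
      calc (u ^ 2 - (1 - q ^ 2)) * (q ^ 2 - u ^ 2) ≤ (u ^ 2 - (1 - q ^ 2)) * 1 :=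
            mul_le_mul_of_nonneg_left hb h1.le
        _ ≤ u ^ 2 := by nlinarith
    have hsle : Real.sqrt ((u ^ 2 - (1 - q ^ 2)) * (q ^ 2 - u ^ 2)) ≤ u := by
      calc Real.sqrt ((u ^ 2 - (1 - q ^ 2)) * (q ^ 2 - u ^ 2)) ≤ Real.sqrt (u ^ 2) :=
            Real.sqrt_le_sqrt hXle
        _ = u := by rw [Real.sqrt_sq hu0.le]
    exact one_div_le_one_div_of_le (Real.sqrt_pos.2 hX) hsle
  have hfull := (tp_core hp hpq hq1 hc).1
  have hintq : IntervalIntegrable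
      (fun u => 1 / Real.sqrt ((u ^ 2 - (1 - q ^ 2)) * (q ^ 2 - u ^ 2))) volume m q := by
    apply hfull.mono_set
    rw [Set.uIcc_of_le hq2.le, Set.uIcc_of_le hpq.le]
    exact Set.Icc_subset_Icc hpm' le_rfl
  have hsplit := intervalIntegral.integral_add_adjacent_intervals hintm hintq
  have hnn : 0 ≤ ∫ u in m..q, 1 / Real.sqrt ((u ^ 2 - (1 - q ^ 2)) * (q ^ 2 - u ^ 2)) :=
    intervalIntegral.integral_nonneg hq2.le (fun u _ => by positivity)
  have hlog : (∫ u in p..m, (1:ℝ) / u) = Real.log m - Real.log p := by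
    rw [integral_one_div (by rw [Set.uIcc_of_le hpm']; exact fun h => absurd h.1 (not_le.2 hp)),
      Real.log_div (ne_of_gt hm0) (ne_of_gt hp)]
  have hcmp := intervalIntegral.integral_mono_on hpm' hint1 hintm hmono
  rw [hlog] at hcmp
  linarith

/-- Existence and uniqueness of the single-pulse state on the tadpole graph. With
`A(u) = u² - u⁴`, `pp 𝔭` the turning point in `(𝔭, 1)` with `pp 𝔭 > 1/√2` and
`A(pp 𝔭) = ¾A(𝔭)`, and `f(𝔭) = ∫_𝔭^{pp 𝔭} du/√(A(u) - ¾A(𝔭))`, one has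
`f(𝔭) → +∞` as `𝔭 → 0⁺` and `f(𝔭) → 0` as `𝔭 → 1⁻`; consequently, if `f` is
continuous and strictly decreasing on `(0,1)`, then for every `ε > 0` the equation
`f(𝔭) = επ` has a unique root `𝔭 ∈ (0,1)`. -/
theorem tadpole_single_pulse_existence_uniqueness
    (A : ℝ → ℝ) (hA : ∀ u : ℝ, A u = u ^ 2 - u ^ 4)
    (pp : ℝ → ℝ)
    (hpp : ∀ p ∈ Set.Ioo (0 : ℝ) 1,
      pp p ∈ Set.Ioo p 1 ∧ 1 / Real.sqrt 2 < pp p ∧ A (pp p) = (3 / 4) * A p)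
    (f : ℝ → ℝ)
    (hf : ∀ p ∈ Set.Ioo (0 : ℝ) 1,
      f p = ∫ u in p..(pp p), 1 / Real.sqrt (A u - (3 / 4) * A p)) :
    Filter.Tendsto f (nhdsWithin 0 (Set.Ioi 0)) Filter.atTop ∧
    Filter.Tendsto f (nhdsWithin 1 (Set.Iio 1)) (nhds 0) ∧
    (ContinuousOn f (Set.Ioo 0 1) → StrictAntiOn f (Set.Ioo 0 1) →
      ∀ ε : ℝ, 0 < ε → ∃! p : ℝ, p ∈ Set.Ioo (0 : ℝ) 1 ∧ f p = ε * Real.pi) := by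
  have hfact : ∀ p ∈ Set.Ioo (0:ℝ) 1,
      p < pp p ∧ pp p < 1 ∧ 1 / Real.sqrt 2 < pp p ∧ 1 - (pp p) ^ 2 < p ^ 2 ∧
      f p = ∫ u in p..(pp p),
        1 / Real.sqrt ((u ^ 2 - (1 - (pp p) ^ 2)) * ((pp p) ^ 2 - u ^ 2)) := by
    intro p hp
    obtain ⟨⟨h1, h2⟩, h3, h4⟩ := hpp p hp
    have hAq : (pp p) ^ 2 - (pp p) ^ 4 = 3 / 4 * (p ^ 2 - p ^ 4) := by
      rw [← hA, ← hA]; exact h4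
    have hq2p : p ^ 2 < (pp p) ^ 2 := by
      nlinarith [mul_lt_mul_of_pos_left h1 (lt_trans hp.1 h1),
        mul_lt_mul_of_pos_right h1 hp.1]
    have hp21 : p ^ 2 < 1 := by nlinarith [hp.1, hp.2]
    have hA4 : 0 < (1/4) * (p ^ 2 - p ^ 4) := by
      nlinarith [mul_lt_mul_of_pos_left hp21 (pow_pos hp.1 2)]
    have hkey : (p ^ 2 - (1 - (pp p) ^ 2)) * ((pp p) ^ 2 - p ^ 2) =
        (1/4) * (p ^ 2 - p ^ 4) := by linear_combination -hAq
    have hc : 1 - (pp p) ^ 2 < p ^ 2 := by nlinarith [hkey, hq2p, hA4]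
    refine ⟨h1, h2, h3, hc, ?_⟩
    rw [hf p hp]
    have heq : ∀ u : ℝ, A u - 3 / 4 * A p =
        (u ^ 2 - (1 - (pp p) ^ 2)) * ((pp p) ^ 2 - u ^ 2) := by
      intro u; rw [hA u, hA p]; linear_combination hAq
    simp only [heq]
  have hm0 : (0:ℝ) < 1 / Real.sqrt 2 := by positivity
  have part1 : Filter.Tendsto f (nhdsWithin 0 (Set.Ioi 0)) Filter.atTop := by
    have hlog := Real.tendsto_log_nhdsGT_zero
    have hlim : Filter.Tendsto (fun p : ℝ => Real.log (1 / Real.sqrt 2) - Real.log p)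
        (nhdsWithin 0 (Set.Ioi 0)) Filter.atTop := by
      simpa [sub_eq_add_neg] using
        Filter.tendsto_atTop_add_const_left _ (Real.log (1 / Real.sqrt 2))
          (Filter.tendsto_neg_atBot_atTop.comp hlog)
    apply Filter.tendsto_atTop_mono' _ _ hlim
    filter_upwards [Ioo_mem_nhdsGT_of_mem (show (0:ℝ) ∈ Set.Ico (0:ℝ) (1 / Real.sqrt 2)
      from ⟨le_refl 0, hm0⟩)] with p hpmem
    have hp1 : p ∈ Set.Ioo (0:ℝ) 1 := ⟨hpmem.1, lt_trans hpmem.2 tp_m_lt_one⟩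
    obtain ⟨h1, h2, h3, hc, hfp⟩ := hfact p hp1
    rw [hfp]
    exact tp_lower hp1.1 h1 h2 h3 hc hpmem.2
  have part2 : Filter.Tendsto f (nhdsWithin 1 (Set.Iio 1)) (nhds 0) := by
    have hlim : Filter.Tendsto (fun p : ℝ => 8 * Real.sqrt (1 - p))
        (nhdsWithin 1 (Set.Iio 1)) (nhds 0) := by
      have hcont : Continuous (fun p : ℝ => 8 * Real.sqrt (1 - p)) := by continuity
      have h0 := hcont.tendsto 1
      simp only [sub_self, Real.sqrt_zero, mul_zero] at h0
      exact h0.mono_left nhdsWithin_le_nhds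
    have hmem : Set.Ioo (9/10 : ℝ) 1 ∈ nhdsWithin (1:ℝ) (Set.Iio 1) :=
      Ioo_mem_nhdsLT_of_mem (show (1:ℝ) ∈ Set.Ioc (9/10 : ℝ) 1 from ⟨by norm_num, le_refl 1⟩)
    apply squeeze_zero' ?_ ?_ hlim
    · filter_upwards [hmem] with p hpmem
      have hp1 : p ∈ Set.Ioo (0:ℝ) 1 := ⟨by linarith [hpmem.1], hpmem.2⟩
      obtain ⟨h1, h2, h3, hc, hfp⟩ := hfact p hp1
      rw [hfp]
      exact intervalIntegral.integral_nonneg h1.le (fun u _ => by positivity)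
    · filter_upwards [hmem] with p hpmem
      have hp1 : p ∈ Set.Ioo (0:ℝ) 1 := ⟨by linarith [hpmem.1], hpmem.2⟩
      obtain ⟨h1, h2, h3, hc, hfp⟩ := hfact p hp1
      have hq2' : (1:ℝ)/2 < (pp p) ^ 2 := by
        nlinarith [mul_self_lt_mul_self hm0.le h3, tp_sqrt_half]
      have hp9 : (9:ℝ)/10 < p := hpmem.1
      have ha : (31:ℝ)/100 ≤ p ^ 2 - (1 - (pp p) ^ 2) := by
        nlinarith [mul_self_lt_mul_self (show (0:ℝ) ≤ 9/10 by norm_num) hp9]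
      have hqb : (2:ℝ)/3 ≤ pp p := le_of_lt (lt_trans tp_m_gt h3)
      have hK : (1:ℝ)/16 ≤ (p ^ 2 - (1 - (pp p) ^ 2)) * (pp p) := by
        nlinarith [mul_le_mul ha hqb (by norm_num) (by linarith)]
      have hsq : (1:ℝ)/4 ≤ Real.sqrt ((p ^ 2 - (1 - (pp p) ^ 2)) * (pp p)) := by
        rw [show (1:ℝ)/4 = Real.sqrt (1/16) by
          rw [show (1:ℝ)/16 = (1/4)^2 by norm_num, Real.sqrt_sq (by norm_num)]]
        exact Real.sqrt_le_sqrt hK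
      have hKinv : (Real.sqrt ((p ^ 2 - (1 - (pp p) ^ 2)) * (pp p)))⁻¹ ≤ 4 := by
        calc (Real.sqrt ((p ^ 2 - (1 - (pp p) ^ 2)) * (pp p)))⁻¹ ≤ ((1:ℝ)/4)⁻¹ :=
              inv_anti₀ (by norm_num) hsq
          _ = 4 := by norm_num
      have hup := (tp_core hp1.1 h1 h2 hc).2
      have hsqle : Real.sqrt (pp p - p) ≤ Real.sqrt (1 - p) :=
        Real.sqrt_le_sqrt (by linarith)
      rw [hfp]
      calc (∫ u in p..(pp p),
            1 / Real.sqrt ((u ^ 2 - (1 - (pp p) ^ 2)) * ((pp p) ^ 2 - u ^ 2))) ≤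
            (Real.sqrt ((p ^ 2 - (1 - (pp p) ^ 2)) * (pp p)))⁻¹ *
              (2 * Real.sqrt (pp p - p)) := hup
        _ ≤ 4 * (2 * Real.sqrt (1 - p)) := by
            apply mul_le_mul hKinv (by linarith) (by positivity) (by norm_num)
        _ = 8 * Real.sqrt (1 - p) := by ring
  refine ⟨part1, part2, ?_⟩
  intro hcont hanti ε hε
  set y : ℝ := ε * Real.pi with hy
  have hy0 : 0 < y := mul_pos hε Real.pi_pos
  have hev1 : ∀ᶠ p in nhdsWithin (0:ℝ) (Set.Ioi 0), y ≤ f p ∧ p ∈ Set.Ioo (0:ℝ) 1 := by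
    filter_upwards [part1.eventually_ge_atTop y,
      Ioo_mem_nhdsGT_of_mem (show (0:ℝ) ∈ Set.Ico (0:ℝ) 1 from ⟨le_refl 0, one_pos⟩)]
      with p h1 h2
    exact ⟨h1, h2⟩
  obtain ⟨p₁, hp₁f, hp₁⟩ := hev1.exists
  have hev2 : ∀ᶠ p in nhdsWithin (1:ℝ) (Set.Iio 1), f p < y ∧ p ∈ Set.Ioo p₁ 1 := by
    filter_upwards [part2.eventually (gt_mem_nhds hy0),
      Ioo_mem_nhdsLT_of_mem (show (1:ℝ) ∈ Set.Ioc p₁ 1 from ⟨hp₁.2, le_refl 1⟩)]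
      with p h1 h2
    exact ⟨h1, h2⟩
  obtain ⟨p₂, hp₂f, hp₂⟩ := hev2.exists
  have hp₁₂ : p₁ ≤ p₂ := hp₂.1.le
  have hsub : Set.Icc p₁ p₂ ⊆ Set.Ioo (0:ℝ) 1 := fun x hx =>
    ⟨lt_of_lt_of_le hp₁.1 hx.1, lt_of_le_of_lt hx.2 hp₂.2⟩
  have hivt := intermediate_value_Icc' hp₁₂ (hcont.mono hsub)
  have hymem : y ∈ Set.Icc (f p₂) (f p₁) := ⟨hp₂f.le, hp₁f⟩
  obtain ⟨p, hpmem, hfpy⟩ := hivt hymem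
  refine ⟨p, ⟨hsub hpmem, hfpy⟩, ?_⟩
  rintro p' ⟨hp'mem, hfp'y⟩
  exact hanti.injOn hp'mem (hsub hpmem) (by rw [hfp'y, hfpy])
end
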